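/- arXiv:1610.00544 — 6 statements merged into one kernel-verified Lean document; each statement's English description precedes it below -/
import Mathlib

section
/- Let n be an odd perfect number whose prime factorization is n = p₁^{α₁} ⋯ p_k^{α_k} · q^{β}, where p₁, …, p_k, q are distinct odd primes, each α_i is even, β is odd, and q ≡ 5 (mod 8). Write σ(q^β)/2 = p₁^{r₁} ⋯ p_k^{r_k} (its prime factorization, with r_i ≥ 0). Then the number of indices i ∈ {1, …, k} such that r_i is odd and p_i is not a quadratic residue modulo q (i.e., the Legendre symbol (p_i/q) = −1) is odd. -/
/-!
`σ(q^β) = 1 + q + ⋯ + q^β ≡ 1 (mod q)` is a nonzero square mod `q`, so by multiplicativity of the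
Legendre symbol `(2/q) · ∏ (pᵢ/q)^{rᵢ} = 1`. Since `q ≡ 5 (mod 8)` gives `(2/q) = -1`, the product
is `-1`, i.e. an odd number of its factors equal `-1`.
-/

open ArithmeticFunction Finset

theorem prod_pow_eq_neg_one_pow_card_filter {ι : Type*} (s : Finset ι) (f : ι → ℤ) (r : ι → ℕ)
    (hf : ∀ i ∈ s, f i = 1 ∨ f i = -1) :
    ∏ i ∈ s, f i ^ r i = (-1) ^ #{i ∈ s | Odd (r i) ∧ f i = -1} := by
  rw [← prod_const, prod_filter]
  refine prod_congr rfl fun i hi => ?_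
  rcases hf i hi with h | h <;> rw [h]
  · simp
  · rcases Nat.even_or_odd (r i) with he | ho
    · simp [he.neg_one_pow, Nat.not_odd_iff_even.mpr he]
    · simp [ho.neg_one_pow, ho]

theorem sigma_one_prime_pow_cast_eq_one {q : ℕ} (hq : q.Prime) (β : ℕ) :
    (sigma 1 (q ^ β) : ZMod q) = 1 := by
  rw [sigma_one_apply, Nat.sum_divisors_prime_pow hq]
  push_cast
  simp [zero_pow_eq]

theorem legendreSym_sigma_one_prime_pow (q : ℕ) [Fact q.Prime] (β : ℕ) :
    legendreSym q (sigma 1 (q ^ β)) = 1 := by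
  rw [legendreSym, Int.cast_natCast, sigma_one_prime_pow_cast_eq_one Fact.out, map_one]

theorem legendreSym_two_of_mod_eight_eq_five {q : ℕ} [Fact q.Prime] (hq : q % 8 = 5) :
    legendreSym q 2 = -1 := by
  rw [legendreSym.at_two (by omega), ZMod.χ₈_nat_mod_eight, hq]
  decide

theorem legendreSym_eq_one_or_neg_one_of_prime_ne {q p : ℕ} [Fact q.Prime] (hp : p.Prime)
    (hpq : p ≠ q) : legendreSym q p = 1 ∨ legendreSym q p = -1 := by
  refine legendreSym.eq_one_or_neg_one q ?_
  rw [Int.cast_natCast, Ne, ZMod.natCast_eq_zero_iff, Nat.prime_dvd_prime_iff_eq Fact.out hp]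
  exact hpq.symm

theorem stmt0_general (k : ℕ) (p : Fin k → ℕ) (q β : ℕ)
    (hp_prime : ∀ i, (p i).Prime)
    (hq_prime : q.Prime) (hpq : ∀ i, p i ≠ q)
    (hq5 : q % 8 = 5)
    (r : Fin k → ℕ)
    (hr : ArithmeticFunction.sigma 1 (q ^ β) = 2 * ∏ i, p i ^ r i) :
    Odd (univ.filter fun i =>
      Odd (r i) ∧ @legendreSym q ⟨hq_prime⟩ (p i) = -1).card := by
  have : Fact q.Prime := ⟨hq_prime⟩
  have h := legendreSym_sigma_one_prime_pow q β
  rw [hr] at h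
  push_cast at h
  rw [legendreSym.mul, legendreSym_two_of_mod_eight_eq_five hq5, ← legendreSym.hom_apply,
    map_prod] at h
  simp only [map_pow, legendreSym.hom_apply] at h
  rw [prod_pow_eq_neg_one_pow_card_filter _ _ _ fun i _ =>
    legendreSym_eq_one_or_neg_one_of_prime_ne (hp_prime i) (hpq i)] at h
  rw [← neg_one_pow_eq_neg_one_iff_odd (R := ℤ) (by decide)]
  linarith

/-- If `n` is an odd perfect number with prime factorization
`n = p₁^{α₁} ⋯ p_k^{α_k} · q^β`, where the `pᵢ` and `q` are distinct odd primes,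
each `αᵢ` is even, `β` is odd and `q ≡ 5 [MOD 8]`, and if
`σ(q^β)/2 = p₁^{r₁} ⋯ p_k^{r_k}`, then the number of indices `i` with `rᵢ` odd
and `pᵢ` a quadratic non-residue mod `q` is odd. -/
theorem stmt0 (n k : ℕ) (p : Fin k → ℕ) (α : Fin k → ℕ) (q β : ℕ)
    (hn_odd : Odd n) (hn_perf : n.Perfect)
    (hp_prime : ∀ i, (p i).Prime) (hp_odd : ∀ i, Odd (p i))
    (hp_inj : Function.Injective p)
    (hq_prime : q.Prime) (hq_odd : Odd q) (hpq : ∀ i, p i ≠ q)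
    (hα_even : ∀ i, Even (α i)) (hα_pos : ∀ i, 0 < α i)
    (hβ_odd : Odd β)
    (hq5 : q % 8 = 5)
    (hfac : n = (∏ i, p i ^ α i) * q ^ β)
    (r : Fin k → ℕ)
    (hr : ArithmeticFunction.sigma 1 (q ^ β) = 2 * ∏ i, p i ^ r i) :
    Odd (univ.filter fun i =>
      Odd (r i) ∧ @legendreSym q ⟨hq_prime⟩ (p i) = -1).card :=
  stmt0_general k p q β hp_prime hq_prime hpq hq5 r hr
end

section
/- Let n be an odd perfect number whose prime factorization is n = p₁^{α₁} ⋯ p_k^{α_k} · q^{β}, where p₁, …, p_k, q are distinct odd primes, each α_i is even, β is odd, and q ≡ 5 (mod 8). Then at least one of the primes p₁, …, p_k is not a quadratic residue modulo q, i.e., there exists a prime p dividing n with p ≠ q and Legendre symbol (p/q) = −1. -/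
/-!
Write `n = m q^β` with `q ∤ m`. As `q` and `β` are odd, `σ(q^β) = 1 + q + ⋯ + q^β` is even,
say `σ(q^β) = 2s`, and `σ(q^β) ≡ 1 (mod q)`, so `q ∤ s`. Then `σ(n) = 2n` reads
`σ(m) s = m q^β`, whence `s ∣ m`. Since `(σ(q^β)/q) = 1` and `(2/q) = -1` for
`q ≡ ±3 (mod 8)`, `(s/q) = -1`, so by multiplicativity some prime factor `r` of `s` has
`(r/q) = -1`; it divides `m`, hence `n`, and is not `q`.
-/

open ArithmeticFunction
open scoped ArithmeticFunction.sigma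

theorem exists_prime_dvd_of_map_eq_neg_one (f : ℕ →*₀ ℤ) {t : ℕ} (ht : f t = -1) :
    ∃ r : ℕ, r.Prime ∧ r ∣ t ∧ f r = -1 := by
  induction t using Nat.recOnMul with
  | zero => simp at ht
  | one => simp at ht
  | prime r hr => exact ⟨r, hr, dvd_rfl, ht⟩
  | mul a b iha ihb =>
    rw [map_mul] at ht
    rcases Int.eq_one_or_neg_one_of_mul_eq_neg_one' ht with ⟨-, hb⟩ | ⟨ha, -⟩
    · obtain ⟨r, hr, hrb, hfr⟩ := ihb hb
      exact ⟨r, hr, hrb.mul_left a, hfr⟩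
    · obtain ⟨r, hr, hra, hfr⟩ := iha ha
      exact ⟨r, hr, hra.mul_right b, hfr⟩

theorem legendreSym.exists_prime_dvd_eq_neg_one (q : ℕ) [Fact q.Prime] {t : ℕ}
    (ht : legendreSym q t = -1) : ∃ r : ℕ, r.Prime ∧ r ∣ t ∧ legendreSym q r = -1 :=
  exists_prime_dvd_of_map_eq_neg_one
    ((legendreSym.hom q).comp (Nat.castRingHom ℤ).toMonoidWithZeroHom) ht

theorem legendreSym.at_two_eq_neg_one {q : ℕ} [Fact q.Prime] (hq : q % 8 = 3 ∨ q % 8 = 5) :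
    legendreSym q 2 = -1 := by
  rw [legendreSym.at_two (by omega), ZMod.χ₈_nat_eq_if_mod_eight]
  omega

theorem natCast_sigma_one_prime_pow {q : ℕ} (hq : q.Prime) (β : ℕ) :
    ((σ 1 (q ^ β) : ℕ) : ZMod q) = 1 := by
  rw [sigma_one_apply_prime_pow hq]
  push_cast
  simp [Finset.sum_range_succ']

theorem even_sigma_one_prime_pow {q β : ℕ} (hq : q.Prime) (hq_odd : Odd q) (hβ : Odd β) :
    Even (σ 1 (q ^ β)) := by
  rw [← ZMod.natCast_eq_zero_iff_even, sigma_one_apply_prime_pow hq]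
  push_cast
  simp [(ZMod.natCast_eq_one_iff_odd).2 hq_odd,
    (ZMod.natCast_eq_zero_iff_even).2 hβ.add_one]

theorem half_sigma_one_prime_pow_dvd {m q β s : ℕ} (hq : q.Prime) (hqm : ¬ q ∣ m)
    (hs : σ 1 (q ^ β) = 2 * s) (hσ : σ 1 (m * q ^ β) = 2 * (m * q ^ β)) : s ∣ m := by
  have hqs : ¬ q ∣ s := by
    intro hdvd
    have : Fact q.Prime := ⟨hq⟩
    have h := natCast_sigma_one_prime_pow hq β
    rw [hs, Nat.cast_mul, (ZMod.natCast_eq_zero_iff _ _).2 hdvd, mul_zero] at h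
    exact zero_ne_one h
  have hcop : m.Coprime (q ^ β) := ((hq.coprime_iff_not_dvd).2 hqm).symm.pow_right β
  have hσs : σ 1 m * s = m * q ^ β := by
    have h : 2 * (σ 1 m * s) = 2 * (m * q ^ β) := by
      rw [← hσ, isMultiplicative_sigma.map_mul_of_coprime hcop, hs]
      ring
    omega
  exact (((hq.coprime_iff_not_dvd).2 hqs).symm.pow_right β).dvd_of_dvd_mul_right
    (Dvd.intro_left _ hσs)

theorem legendreSym_half_sigma_one_prime_pow {q β s : ℕ} [Fact q.Prime]
    (hq : q % 8 = 3 ∨ q % 8 = 5) (hs : σ 1 (q ^ β) = 2 * s) : legendreSym q s = -1 := by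
  have h : legendreSym q (σ 1 (q ^ β)) = 1 := by
    rw [legendreSym, Int.cast_natCast, natCast_sigma_one_prime_pow Fact.out, map_one]
  rw [hs, Nat.cast_mul, legendreSym.mul, Nat.cast_ofNat, legendreSym.at_two_eq_neg_one hq] at h
  omega

theorem Nat.Perfect.exists_prime_dvd_legendreSym_eq_neg_one {m q β : ℕ} [Fact q.Prime]
    (hqm : ¬ q ∣ m) (hq : q % 8 = 3 ∨ q % 8 = 5) (hβ : Odd β) (hn : (m * q ^ β).Perfect) :
    ∃ r : ℕ, r.Prime ∧ r ∣ m ∧ legendreSym q r = -1 := by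
  have hq_odd : Odd q := Nat.odd_iff.2 (by omega)
  obtain ⟨s, hs⟩ := (even_sigma_one_prime_pow Fact.out hq_odd hβ).two_dvd
  have hσ : σ 1 (m * q ^ β) = 2 * (m * q ^ β) := by
    rw [sigma_one_apply]
    exact (Nat.perfect_iff_sum_divisors_eq_two_mul hn.2).1 hn
  obtain ⟨r, hr, hrs, hrq⟩ :=
    legendreSym.exists_prime_dvd_eq_neg_one q (legendreSym_half_sigma_one_prime_pow hq hs)
  exact ⟨r, hr, hrs.trans (half_sigma_one_prime_pow_dvd Fact.out hqm hs hσ), hrq⟩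

theorem stmt1_general (n k : ℕ) (p : Fin k → ℕ) (α : Fin k → ℕ) (q β : ℕ)
    (hn_perf : n.Perfect)
    (hp_prime : ∀ i, (p i).Prime)
    (hq_prime : q.Prime) (hpq : ∀ i, p i ≠ q)
    (hβ_odd : Odd β)
    (hq5 : q % 8 = 5)
    (hfac : n = (∏ i, p i ^ α i) * q ^ β) :
    ∃ r : ℕ, r.Prime ∧ r ∣ n ∧ r ≠ q ∧ @legendreSym q ⟨hq_prime⟩ r = -1 := by
  have : Fact q.Prime := ⟨hq_prime⟩
  have hqM : ¬ q ∣ ∏ i, p i ^ α i := by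
    rw [Prime.dvd_finsetProd_iff hq_prime.prime]
    rintro ⟨i, -, hi⟩
    exact hpq i ((Nat.prime_dvd_prime_iff_eq hq_prime (hp_prime i)).1
      (hq_prime.dvd_of_dvd_pow hi)).symm
  subst hfac
  obtain ⟨r, hr, hrM, hrq⟩ :=
    hn_perf.exists_prime_dvd_legendreSym_eq_neg_one hqM (Or.inr hq5) hβ_odd
  exact ⟨r, hr, hrM.mul_right _, fun h => hqM (h ▸ hrM), hrq⟩

/-- If `n` is an odd perfect number with prime factorization
`n = p₁^{α₁} ⋯ p_k^{α_k} · q^β`, where the `pᵢ` and `q` are distinct odd primes,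
each `αᵢ` is even, `β` is odd and `q ≡ 5 [MOD 8]`, then some prime `p` dividing `n`
with `p ≠ q` is a quadratic non-residue modulo `q`. -/
theorem stmt1 (n k : ℕ) (p : Fin k → ℕ) (α : Fin k → ℕ) (q β : ℕ)
    (hn_odd : Odd n) (hn_perf : n.Perfect)
    (hp_prime : ∀ i, (p i).Prime) (hp_odd : ∀ i, Odd (p i))
    (hp_inj : Function.Injective p)
    (hq_prime : q.Prime) (hq_odd : Odd q) (hpq : ∀ i, p i ≠ q)
    (hα_even : ∀ i, Even (α i)) (hα_pos : ∀ i, 0 < α i)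
    (hβ_odd : Odd β)
    (hq5 : q % 8 = 5)
    (hfac : n = (∏ i, p i ^ α i) * q ^ β) :
    ∃ r : ℕ, r.Prime ∧ r ∣ n ∧ r ≠ q ∧ @legendreSym q ⟨hq_prime⟩ r = -1 :=
  stmt1_general n k p α q β hn_perf hp_prime hq_prime hpq hβ_odd hq5 hfac
end

section
/- Let n be an odd perfect number whose prime factorization is n = p₁^{α₁} ⋯ p_k^{α_k} · p_{k+1}^{β}, where p₁, …, p_{k+1} are distinct odd primes, each α_i (1 ≤ i ≤ k) is even, β is odd, and p_{k+1} ≡ 1 (mod 8). Then there exist indices i ≠ j in {1, …, k+1} such that p_i is a nonzero square in ℤ/p_jℤ, i.e., the Legendre symbol (p_i / p_j) = 1. -/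
/-!
Let `q = p_{k+1}`. Since `q ∣ n ∣ 2n = σ(n) = ∏ σ(pᵢ^{αᵢ})`, the prime `q` divides some
`σ(pᵢ^{αᵢ})`, and `i ≠ k+1` because `σ(q^β) ≡ 1 (mod q)`. With `αᵢ = 2m` this says
`1 + pᵢ + ⋯ + pᵢ^{2m} ≡ 0`, so `pᵢ^{2m+1} ≡ 1 (mod q)` and `pᵢ ≡ (pᵢ^{m+1})²` is a nonzero square.
-/

open Finset ArithmeticFunction
open scoped ArithmeticFunction.sigma

theorem Nat.Perfect.sigma_one_eq {n : ℕ} (h : n.Perfect) : σ 1 n = 2 * n := by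
  rw [sigma_one_apply]
  exact (Nat.perfect_iff_sum_divisors_eq_two_mul h.2).1 h

theorem isSquare_of_pow_two_mul_add_one_eq_one {M : Type*} [Monoid M] {x : M} {m : ℕ}
    (h : x ^ (2 * m + 1) = 1) : IsSquare x :=
  ⟨x ^ (m + 1), by
    rw [← pow_add, show m + 1 + (m + 1) = 2 * m + 1 + 1 by ring, pow_succ, h, one_mul]⟩

theorem pow_eq_one_of_geom_sum_eq_zero {R : Type*} [Ring R] {x : R} {n : ℕ}
    (h : ∑ i ∈ range n, x ^ i = 0) : x ^ n = 1 := by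
  have hmul := geom_sum_mul x n
  rw [h, zero_mul] at hmul
  exact sub_eq_zero.1 hmul.symm

theorem legendreSym_eq_one_of_dvd_geom_sum {q r m : ℕ} [Fact q.Prime]
    (h : q ∣ ∑ j ∈ range (2 * m + 1), r ^ j) : legendreSym q r = 1 := by
  have hsum : ∑ j ∈ range (2 * m + 1), (r : ZMod q) ^ j = 0 := by
    exact_mod_cast (ZMod.natCast_eq_zero_iff _ _).2 h
  have hpow := pow_eq_one_of_geom_sum_eq_zero hsum
  have hr : (r : ZMod q) ≠ 0 := fun h0 => by simp [h0] at hpow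
  exact (legendreSym.eq_one_iff' q hr).2 (isSquare_of_pow_two_mul_add_one_eq_one hpow)

theorem Nat.Prime.not_dvd_sigma_one_pow {q : ℕ} (hq : q.Prime) (a : ℕ) : ¬ q ∣ σ 1 (q ^ a) := by
  rw [sigma_one_apply_prime_pow hq, sum_range_succ', pow_zero]
  intro hdvd
  have hq_dvd_sum : q ∣ ∑ j ∈ range a, q ^ (j + 1) :=
    dvd_sum fun j _ => dvd_pow_self q j.succ_ne_zero
  exact hq.not_dvd_one ((Nat.dvd_add_right hq_dvd_sum).1 hdvd)

theorem exists_dvd_sigma_one_prime_pow_of_dvd {ι : Type*} [Fintype ι] {p : ι → ℕ}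
    (hp : ∀ i, (p i).Prime) (hinj : Function.Injective p) (α : ι → ℕ) {q : ℕ} (hq : q.Prime)
    (h : q ∣ σ 1 (∏ i, p i ^ α i)) : ∃ i, q ∣ σ 1 (p i ^ α i) := by
  have hcop :
      ((univ : Finset ι) : Set ι).Pairwise (Function.onFun Nat.Coprime fun i => p i ^ α i) :=
    fun i _ j _ hij => Nat.Coprime.pow _ _
      ((Nat.coprime_primes (hp i) (hp j)).2 fun hpij => hij (hinj hpij))
  rw [isMultiplicative_sigma.map_prod _ _ hcop] at h
  obtain ⟨i, -, hi⟩ := hq.prime.exists_mem_finset_dvd h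
  exact ⟨i, hi⟩

theorem stmt5_general (n k : ℕ) (p : Fin (k + 1) → ℕ) (α : Fin (k + 1) → ℕ)
    (hn_perf : n.Perfect)
    (hp_prime : ∀ i, (p i).Prime)
    (hp_inj : Function.Injective p)
    (hα_even : ∀ i : Fin k, Even (α i.castSucc))
    (hα_pos : ∀ i, 0 < α i)
    (hfac : n = ∏ i, p i ^ α i) :
    ∃ i j : Fin (k + 1), i ≠ j ∧ @legendreSym (p j) ⟨hp_prime j⟩ (p i) = 1 := by
  have hq : (p (Fin.last k)).Prime := hp_prime _
  have := Fact.mk hq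
  have hq_dvd_n : p (Fin.last k) ∣ n := hfac ▸
    (dvd_pow_self _ (hα_pos _).ne').trans (dvd_prod_of_mem _ (mem_univ _))
  have hq_dvd_sigma : p (Fin.last k) ∣ σ 1 (∏ i, p i ^ α i) := by
    rw [← hfac, hn_perf.sigma_one_eq]
    exact hq_dvd_n.mul_left 2
  obtain ⟨i, hi⟩ := exists_dvd_sigma_one_prime_pow_of_dvd hp_prime hp_inj α hq hq_dvd_sigma
  have hi_ne : i ≠ Fin.last k := by
    rintro rfl
    exact hq.not_dvd_sigma_one_pow _ hi
  obtain ⟨i, rfl⟩ := Fin.exists_castSucc_eq.2 hi_ne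
  obtain ⟨m, hm⟩ := hα_even i
  rw [sigma_one_apply_prime_pow (hp_prime _), hm, ← two_mul] at hi
  exact ⟨i.castSucc, Fin.last k, hi_ne, legendreSym_eq_one_of_dvd_geom_sum hi⟩

/-- If `n` is an odd perfect number with prime factorization
`n = p₁^{α₁} ⋯ p_k^{α_k} · p_{k+1}^β`, where the `pᵢ` are distinct odd primes,
each `αᵢ` (for `i ≤ k`) is even, `β` is odd and `p_{k+1} ≡ 1 [MOD 8]`, then
there are indices `i ≠ j` such that `pᵢ` is a nonzero square modulo `p_j`. -/
theorem stmt5 (n k : ℕ) (p : Fin (k + 1) → ℕ) (α : Fin (k + 1) → ℕ)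
    (hn_odd : Odd n) (hn_perf : n.Perfect)
    (hp_prime : ∀ i, (p i).Prime) (hp_odd : ∀ i, Odd (p i))
    (hp_inj : Function.Injective p)
    (hα_even : ∀ i : Fin k, Even (α i.castSucc))
    (hα_pos : ∀ i, 0 < α i)
    (hβ_odd : Odd (α (Fin.last k)))
    (hq1 : p (Fin.last k) % 8 = 1)
    (hfac : n = ∏ i, p i ^ α i) :
    ∃ i j : Fin (k + 1), i ≠ j ∧ @legendreSym (p j) ⟨hp_prime j⟩ (p i) = 1 :=
  stmt5_general n k p α hn_perf hp_prime hp_inj hα_even hα_pos hfac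
end

section
/- If n is an odd perfect number, then exactly one prime in the prime factorization of n occurs with an odd exponent; that is, there is exactly one prime q dividing n whose multiplicity in n is odd, and every other prime dividing n has even multiplicity. -/
/-!
Since `σ` is multiplicative, `2 n = σ(n) = ∏_{p ∣ n} (1 + p + ⋯ + p^{e_p})`. For odd `p` the factor
`1 + p + ⋯ + p^{e_p}` is a sum of `e_p + 1` odd numbers, so it is even exactly when `e_p` is odd.
As `n` is odd, `2` divides `2 n` exactly once, so exactly one factor is even.
-/

open Finset

theorem Prime.existsUnique_dvd_of_dvd_prod_of_not_sq_dvd {ι M : Type*} [CommMonoidWithZero M]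
    {p : M} (hp : Prime p) {s : Finset ι} {f : ι → M} (hdvd : p ∣ ∏ i ∈ s, f i)
    (hsq : ¬p ^ 2 ∣ ∏ i ∈ s, f i) : ∃! i, i ∈ s ∧ p ∣ f i := by
  classical
  obtain ⟨i, hi, hpi⟩ := hp.exists_mem_finset_dvd hdvd
  refine ⟨i, ⟨hi, hpi⟩, fun j ⟨hj, hpj⟩ => ?_⟩
  by_contra hji
  apply hsq
  rw [← mul_prod_erase s f hi, ← mul_prod_erase (s.erase i) f (mem_erase.mpr ⟨hji, hj⟩),
    ← mul_assoc, sq]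
  exact dvd_mul_of_dvd_left (mul_dvd_mul hpi hpj) _

theorem Nat.even_geom_sum_iff {p : ℕ} (hp : Odd p) (m : ℕ) :
    Even (∑ k ∈ range m, p ^ k) ↔ Even m := by
  induction m with
  | zero => simp
  | succ m ih =>
    rw [sum_range_succ, Nat.even_add, ih, Nat.even_add_one, iff_false_intro (Nat.not_even_iff_odd.mpr (hp.pow (n := m)))]
    tauto

/-- If `n` is an odd perfect number, then there is exactly one prime dividing
`n` whose multiplicity in `n` is odd. -/
theorem stmt9 (n : ℕ) (hn_odd : Odd n) (hn_perf : n.Perfect) :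
    ∃! q : ℕ, q.Prime ∧ q ∣ n ∧ Odd (n.factorization q) := by
  have hn0 : n ≠ 0 := hn_perf.2.ne'
  have hσ : ∏ p ∈ n.primeFactors, ∑ k ∈ range (n.factorization p + 1), p ^ k = 2 * n := by
    rw [← Nat.sum_divisors hn0, (Nat.perfect_iff_sum_divisors_eq_two_mul hn_perf.2).mp hn_perf]
  have hsq : ¬2 ^ 2 ∣ 2 * n := by
    rw [pow_two, Nat.mul_dvd_mul_iff_left two_pos, ← even_iff_two_dvd]
    exact Nat.not_even_iff_odd.mpr hn_odd
  have key := Nat.prime_two.prime.existsUnique_dvd_of_dvd_prod_of_not_sq_dvd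
    (hσ ▸ dvd_mul_right 2 n) (hσ ▸ hsq)
  refine (existsUnique_congr fun q => ?_).mp key
  rw [Nat.mem_primeFactors_of_ne_zero hn0, and_assoc, ← even_iff_two_dvd]
  refine and_congr_right fun _ => and_congr_right fun hqn => ?_
  rw [Nat.even_geom_sum_iff (hn_odd.of_dvd_nat hqn), Nat.even_add_one, Nat.not_even_iff_odd]
end

section
/- Let n be an odd perfect number and let q be a prime dividing n whose exponent β in the prime factorization of n is odd. Then β ≡ 1 (mod 4). -/
/-!
Since `q ^ β` is a unitary divisor of `n`, multiplicativity of `σ` gives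
`σ (q ^ β) ∣ σ n = 2 n`, and `4 ∤ 2 n` as `n` is odd. Reducing
`σ (q ^ β) = 1 + q + ⋯ + q ^ β` modulo 4: if `q ≡ 3` the `β + 1` terms cancel in pairs, so
`q + 1 ∣ σ (q ^ β)` and `4 ∣ σ (q ^ β)`; hence `q ≡ 1`, and then `σ (q ^ β) ≡ β + 1 (mod 4)`
forces `β ≡ 1 (mod 4)`.
-/

open ArithmeticFunction Finset

theorem Nat.Perfect.sigma_one_eq_two_mul {n : ℕ} (h : n.Perfect) : sigma 1 n = 2 * n := by
  rw [sigma_one_apply]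
  exact (Nat.perfect_iff_sum_divisors_eq_two_mul h.2).mp h

theorem sigma_ordProj_dvd_sigma (k : ℕ) {n p : ℕ} (hp : p.Prime) (hn : n ≠ 0) :
    sigma k (p ^ n.factorization p) ∣ sigma k n := by
  have hcop : (p ^ n.factorization p).Coprime (n / p ^ n.factorization p) :=
    (Nat.coprime_ordCompl hp hn).pow_left _
  conv_rhs => rw [← Nat.ordProj_mul_ordCompl_eq_self n p]
  rw [isMultiplicative_sigma.map_mul_of_coprime hcop]
  exact dvd_mul_right _ _

theorem Nat.geom_sum_modEq_of_modEq_one {q d : ℕ} (hq : q ≡ 1 [MOD d]) (m : ℕ) :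
    ∑ i ∈ range m, q ^ i ≡ m [MOD d] := by
  simpa using Nat.ModEq.sum (s := range m) fun i _ => hq.pow i

theorem Nat.geom_sum_range_two_mul (q m : ℕ) :
    ∑ i ∈ range (2 * m), q ^ i = (q + 1) * ∑ i ∈ range m, (q ^ 2) ^ i := by
  induction m with
  | zero => simp
  | succ m ih =>
    rw [show 2 * (m + 1) = 2 * m + 1 + 1 by ring, sum_range_succ, sum_range_succ, ih,
      sum_range_succ]
    ring

theorem Nat.mod_four_eq_one_of_not_four_dvd_geom_sum {q β : ℕ} (hq : Odd q) (hβ : Odd β)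
    (h : ¬ 4 ∣ ∑ i ∈ range (β + 1), q ^ i) : β % 4 = 1 := by
  obtain ⟨m, rfl⟩ := hβ
  have hq4 : q % 4 = 1 ∨ q % 4 = 3 := by rcases hq with ⟨k, rfl⟩; omega
  rcases hq4 with hq1 | hq3
  · have := Nat.geom_sum_modEq_of_modEq_one (d := 4) hq1 (2 * m + 1 + 1)
    unfold Nat.ModEq at this
    omega
  · exfalso
    apply h
    rw [show 2 * m + 1 + 1 = 2 * (m + 1) by ring, Nat.geom_sum_range_two_mul]
    exact Dvd.dvd.mul_right (by omega) _

/-- If `n` is an odd perfect number and `q` is a prime dividing `n` with odd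
multiplicity `β`, then `β ≡ 1 [MOD 4]`. -/
theorem stmt10 (n q : ℕ) (hn_odd : Odd n) (hn_perf : n.Perfect)
    (hq_prime : q.Prime) (hq_dvd : q ∣ n)
    (β : ℕ) (hβ : β = n.factorization q) (hβ_odd : Odd β) :
    β % 4 = 1 := by
  have hσ_dvd : sigma 1 (q ^ β) ∣ 2 * n := by
    rw [hβ, ← hn_perf.sigma_one_eq_two_mul]
    exact sigma_ordProj_dvd_sigma 1 hq_prime hn_perf.2.ne'
  have h4 : ¬ 4 ∣ sigma 1 (q ^ β) := fun h4 => by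
    obtain ⟨k, hk⟩ := h4.trans hσ_dvd
    obtain ⟨m, rfl⟩ := hn_odd
    omega
  rw [sigma_one_apply_prime_pow hq_prime] at h4
  exact Nat.mod_four_eq_one_of_not_four_dvd_geom_sum (hn_odd.of_dvd_nat hq_dvd) hβ_odd h4
end

section
/- There is no odd perfect number of the form n = p^α · q^β, where p and q are distinct odd primes, α is even, and β is odd. Consequently (together with the facts that an odd perfect number is not a prime power and has exactly one odd prime exponent), every odd perfect number has at least three distinct prime factors. -/
/-!
Sylvester's bound: writing `n = ∏ p ^ aₚ`, each factor satisfies `σ(p ^ a) (p - 1) < p ^ (a + 1)`,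
so `σ(n) / n < ∏_{p ∣ n} p / (p - 1)`. For a perfect `n` the left side is `2`, while for at most two
odd primes the right side is at most `3/2 · 5/4 = 15/8`. A number `p ^ α * q ^ β` has at most two
prime factors.
-/

open ArithmeticFunction Finset
open scoped ArithmeticFunction.sigma

namespace Nat

lemma Perfect.sigma_one_eq_s12 {n : ℕ} (h : n.Perfect) : σ 1 n = 2 * n := by
  rw [sigma_one_apply]
  exact (perfect_iff_sum_divisors_eq_two_mul h.2).mp h

lemma sigma_one_prime_pow_mul_sub_one {p : ℕ} (hp : p.Prime) (a : ℕ) :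
    σ 1 (p ^ a) * (p - 1) = p ^ (a + 1) - 1 := by
  rw [sigma_one_apply_prime_pow hp, geom_sum_mul_of_one_le hp.one_lt.le]

lemma sigma_one_mul_prod_sub_one_le {n : ℕ} (hn : n ≠ 0) :
    σ 1 n * ∏ p ∈ n.primeFactors, (p - 1) ≤ n * ∏ p ∈ n.primeFactors, p := by
  have hσ : σ 1 n = ∏ p ∈ n.primeFactors, σ 1 (p ^ n.factorization p) :=
    isMultiplicative_sigma.multiplicative_factorization _ hn
  have hn' : ∏ p ∈ n.primeFactors, p ^ n.factorization p = n := prod_factorization_pow_eq_self hn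
  calc σ 1 n * ∏ p ∈ n.primeFactors, (p - 1)
      = ∏ p ∈ n.primeFactors, σ 1 (p ^ n.factorization p) * (p - 1) := by
        rw [hσ, prod_mul_distrib]
    _ ≤ ∏ p ∈ n.primeFactors, p ^ (n.factorization p + 1) := prod_le_prod' fun p hp => by
        rw [sigma_one_prime_pow_mul_sub_one (prime_of_mem_primeFactors hp)]
        exact Nat.sub_le _ _
    _ = n * ∏ p ∈ n.primeFactors, p := by
        simp_rw [pow_succ, prod_mul_distrib, hn']

lemma prod_lt_two_mul_prod_sub_one {S : Finset ℕ} (hS : ∀ p ∈ S, Odd p ∧ 1 < p)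
    (hcard : S.card ≤ 2) : ∏ p ∈ S, p < 2 * ∏ p ∈ S, (p - 1) := by
  interval_cases h : S.card
  · simp [Finset.card_eq_zero.mp h]
  · obtain ⟨p, rfl⟩ := card_eq_one.mp h
    obtain ⟨⟨k, rfl⟩, hp⟩ := hS p (mem_singleton_self p)
    simp only [prod_singleton]
    omega
  · obtain ⟨p, q, hpq, rfl⟩ := card_eq_two.mp h
    obtain ⟨⟨k, rfl⟩, hp⟩ := hS p (by simp)
    obtain ⟨⟨m, rfl⟩, hq⟩ := hS q (by simp)
    rw [prod_pair hpq, prod_pair hpq]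
    simp only [Nat.add_sub_cancel]
    rcases lt_or_gt_of_ne (show k ≠ m by omega) with hkm | hkm
    · nlinarith [Nat.mul_le_mul_left k (show 2 ≤ m by omega),
        Nat.mul_le_mul_right m (show 1 ≤ k by omega)]
    · nlinarith [Nat.mul_le_mul_right m (show 2 ≤ k by omega),
        Nat.mul_le_mul_left k (show 1 ≤ m by omega)]

theorem Perfect.three_le_card_primeFactors_of_odd {n : ℕ} (h : n.Perfect) (hodd : Odd n) :
    3 ≤ n.primeFactors.card := by
  by_contra! hcard
  have hS : ∀ p ∈ n.primeFactors, Odd p ∧ 1 < p := fun p hp =>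
    ⟨hodd.of_dvd_nat (dvd_of_mem_primeFactors hp), (prime_of_mem_primeFactors hp).one_lt⟩
  have hbound := sigma_one_mul_prod_sub_one_le h.2.ne'
  rw [h.sigma_one_eq_s12, mul_assoc, mul_left_comm] at hbound
  have h_small := prod_lt_two_mul_prod_sub_one hS (by omega)
  have h_large := Nat.le_of_mul_le_mul_left hbound h.2
  omega

lemma primeFactors_prime_pow_subset {p : ℕ} (hp : p.Prime) (a : ℕ) :
    (p ^ a).primeFactors ⊆ {p} := by
  rcases eq_or_ne a 0 with rfl | ha
  · simp
  · rw [primeFactors_prime_pow ha hp]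

lemma card_primeFactors_prime_pow_mul_prime_pow_le_two {p q : ℕ} (hp : p.Prime) (hq : q.Prime)
    (α β : ℕ) : (p ^ α * q ^ β).primeFactors.card ≤ 2 := by
  have hsub : (p ^ α * q ^ β).primeFactors ⊆ {p, q} := by
    rw [primeFactors_mul (pow_ne_zero _ hp.ne_zero) (pow_ne_zero _ hq.ne_zero)]
    exact union_subset_union (primeFactors_prime_pow_subset hp α)
      (primeFactors_prime_pow_subset hq β)
  exact (card_le_card hsub).trans card_le_two

end Nat

/-- There is no odd perfect number of the form `p^α * q^β` with `p, q` distinct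
odd primes, `α` even and `β` odd; consequently, every odd perfect number has at
least three distinct prime factors. -/
theorem stmt12 :
    (∀ n p q α β : ℕ, Odd n → n.Perfect → p.Prime → q.Prime → p ≠ q →
      Odd p → Odd q → Even α → Odd β → n ≠ p ^ α * q ^ β) ∧
    (∀ n : ℕ, Odd n → n.Perfect → 3 ≤ n.primeFactors.card) := by
  refine ⟨?_, fun n hodd hperf => hperf.three_le_card_primeFactors_of_odd hodd⟩
  rintro n p q α β hodd hperf hp hq - - - - - rfl
  have h_le_two := Nat.card_primeFactors_prime_pow_mul_prime_pow_le_two hp hq α β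
  have h_three_le := hperf.three_le_card_primeFactors_of_odd hodd
  omega
end
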